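/- The map sending a composition (p_1,…,p_k) to the word x_{p_1}x_{p_2}⋯x_{p_k} is an order isomorphism from the poset 𝔑 of compositions onto the poset of words over the alphabet {x_1, x_2, x_3, …} in which m_1 ≤ m_2 if and only if m_2 can be obtained from m_1 by a finite sequence of operations of the following forms: multiplying by a word on the left, multiplying by a word on the right, or replacing an occurrence of a letter x_i by a letter x_j with j > i. -/

import Mathlib

/-- Compositions are encoded as lists of positive integers (their parts).
`NCoversP P Q` : `Q` covers `P` in the poset 𝔑. -/
def NCoversP (P Q : List ℕ+) : Prop :=
  Q = 1 :: P ∨ Q = P ++ [1] ∨ ∃ a x b, P = a ++ x :: b ∧ Q = a ++ (x + 1) :: b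

/-- The order of 𝔑: reflexive-transitive closure of the cover relation. -/
def NLe : List ℕ+ → List ℕ+ → Prop := Relation.ReflTransGen NCoversP

/-- One elementary operation on words over the alphabet {x₁, x₂, …}: multiply by a
word on the left, multiply by a word on the right, or replace an occurrence of a
letter `xᵢ` by `xⱼ` with `j > i`.  A word `x_{i₁}⋯x_{i_r}` is encoded as the list
`[i₁,…,i_r]` of (positive) indices of its letters. -/
def WordStep (m₁ m₂ : List ℕ+) : Prop :=
  (∃ w, m₂ = w ++ m₁) ∨ (∃ w, m₂ = m₁ ++ w) ∨
    ∃ (a : List ℕ+) (i j : ℕ+) (b : List ℕ+), i < j ∧ m₁ = a ++ i :: b ∧ m₂ = a ++ j :: b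

/-- The order on words: `m₁ ≤ m₂` iff `m₂` is obtained from `m₁` by a finite
sequence of the elementary operations. -/
def WordLe : List ℕ+ → List ℕ+ → Prop := Relation.ReflTransGen WordStep

/-!
Both orders are reflexive-transitive closures, so it suffices that each generating step of one
order is a chain of steps of the other. A cover in 𝔑 is a special word operation. Conversely,
raising a letter from `xᵢ` to `xⱼ` is `j - i` covers, and a letter `xⱼ` is added at an end by
inserting `x₁` and raising it, so multiplying by a word adds its letters one at a time.
-/

open Relation

theorem NCoversP.wordStep {P Q : List ℕ+} : NCoversP P Q → WordStep P Q
  | .inl h => .inl ⟨[1], h⟩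
  | .inr (.inl h) => .inr (.inl ⟨[1], h⟩)
  | .inr (.inr ⟨a, x, b, hP, hQ⟩) =>
    .inr (.inr ⟨a, x, x + 1, b, PNat.lt_add_right x 1, hP, hQ⟩)

namespace NLe

theorem letter_mono (a b : List ℕ+) {i j : ℕ+} (hij : i ≤ j) :
    NLe (a ++ i :: b) (a ++ j :: b) := by
  induction j with
  | one => rw [le_antisymm hij one_le]; exact .refl
  | succ j ih =>
    rcases hij.lt_or_eq with hlt | rfl
    · exact (ih (PNat.lt_add_one_iff.mp hlt)).tail (.inr (.inr ⟨a, j, b, rfl, rfl⟩))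
    · exact .refl

theorem cons (P : List ℕ+) (i : ℕ+) : NLe P (i :: P) :=
  (ReflTransGen.single (.inl rfl)).trans (letter_mono [] P one_le)

theorem snoc (P : List ℕ+) (i : ℕ+) : NLe P (P ++ [i]) :=
  (ReflTransGen.single (.inr (.inl rfl))).trans (letter_mono P [] one_le)

theorem append_left (w P : List ℕ+) : NLe P (w ++ P) := by
  induction w with
  | nil => exact .refl
  | cons c w ih => exact ih.trans (cons (w ++ P) c)

theorem append_right (P w : List ℕ+) : NLe P (P ++ w) := by
  induction w using List.reverseRecOn with
  | nil => rw [List.append_nil]; exact .refl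
  | append_singleton w c ih => rw [← List.append_assoc]; exact ih.trans (snoc (P ++ w) c)

end NLe

theorem WordStep.nle {P Q : List ℕ+} : WordStep P Q → NLe P Q
  | .inl ⟨w, hQ⟩ => hQ ▸ NLe.append_left w P
  | .inr (.inl ⟨w, hQ⟩) => hQ ▸ NLe.append_right P w
  | .inr (.inr ⟨a, _, _, b, hij, hP, hQ⟩) => hP ▸ hQ ▸ NLe.letter_mono a b hij.le

/-- The map `(p₁,…,p_k) ↦ x_{p₁}x_{p₂}⋯x_{p_k}` is an order
isomorphism from the poset 𝔑 of compositions onto the poset of words described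
above.  Under the chosen encodings this map is the identity on underlying sets
(a bijection), so the statement is that it and its inverse are order preserving,
i.e. the two orders coincide. -/
theorem statement18 : ∀ P Q : List ℕ+, NLe P Q ↔ WordLe P Q := fun P Q =>
  ⟨reflTransGen_le_of_le (r := ReflTransGen WordStep) (fun _ _ h => .single h.wordStep) P Q,
    reflTransGen_le_of_le (r := ReflTransGen NCoversP) (fun _ _ h => h.nle) P Q⟩
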